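/- arXiv:1202.3695 — 2 statements merged into one kernel-verified Lean document; each statement's English description precedes it below -/
import Mathlib

section
/- For every positive integer k, 17 divides J_k if and only if k ≡ 54 (mod 144). -/
/-- The sequence `J_k = Norm((1+2α^k))` with `α = (1+√-7)/2`, defined by its linear
recurrence with `J 0 = 9`, `J 1 = J 2 = 11`, `J 3 = 23` (so `J 4 = 67`). -/
def J : ℕ → ℤ
  | 0 => 9
  | 1 => 11
  | 2 => 11
  | 3 => 23
  | (k + 4) => 4 * J (k + 3) - 7 * J (k + 2) + 8 * J (k + 1) - 4 * J k

abbrev V := ZMod 17 × ZMod 17 × ZMod 17 × ZMod 17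

def step (v : V) : V :=
  (v.2.1, v.2.2.1, v.2.2.2, 4 * v.2.2.2 - 7 * v.2.2.1 + 8 * v.2.1 - 4 * v.1)

def g (n : ℕ) : V := step^[n] (9, 11, 11, 23)

lemma g_succ (n : ℕ) : g (n + 1) = step (g n) := by
  simp [g, Function.iterate_succ_apply']

lemma g_eq_J : ∀ k : ℕ, g k = ((J k : ZMod 17), (J (k+1) : ZMod 17),
    (J (k+2) : ZMod 17), (J (k+3) : ZMod 17)) := by
  intro k
  induction k with
  | zero => decide
  | succ n ih =>
      rw [g_succ, ih]
      show _ = ((J (n+1) : ZMod 17), (J (n+2) : ZMod 17), (J (n+3) : ZMod 17),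
        (J (n+4) : ZMod 17))
      simp only [step, J]
      push_cast
      try ring_nf

set_option maxRecDepth 10000 in
lemma g_period : ∀ k : ℕ, g (k + 144) = g k := by
  intro k
  induction k with
  | zero => decide
  | succ n ih =>
      have : n + 1 + 144 = (n + 144) + 1 := by ring
      rw [this, g_succ, ih, g_succ]

lemma g_mod (k : ℕ) : g k = g (k % 144) := by
  conv_lhs => rw [← Nat.div_add_mod k 144]
  generalize k / 144 = q
  induction q with
  | zero => simp
  | succ m ih =>
      have : 144 * (m + 1) + k % 144 = (144 * m + k % 144) + 144 := by ring
      rw [this, g_period, ih]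

set_option maxRecDepth 100000 in
lemma g_zero_iff : ∀ r : ℕ, r < 144 → ((g r).1 = 0 ↔ r = 54) := by decide

theorem seventeen_dvd_J_iff : ∀ k : ℕ, 0 < k → ((17 : ℤ) ∣ J k ↔ k % 144 = 54) := by
  intro k _
  have h1 : (17 : ℤ) ∣ J k ↔ ((J k : ZMod 17) = 0) := by
    rw [ZMod.intCast_zmod_eq_zero_iff_dvd]; norm_num
  have h2 : (J k : ZMod 17) = (g k).1 := by rw [g_eq_J]
  rw [h1, h2, g_mod, g_zero_iff _ (Nat.mod_lt _ (by norm_num))]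
end

section
/- For every integer k ≥ 1, J_k is odd, not divisible by 7, and J_k ≥ 11; moreover J_k ≡ 3 (mod 4) for all k > 1, so J_k is never a perfect square for k > 1. -/
/-- `aa k = α^k + ᾱ^k`. -/
def aa : ℕ → ℤ
  | 0 => 2
  | 1 => 1
  | (k + 2) => aa (k + 1) - 2 * aa k

/-- `bb k = (α^k - ᾱ^k)/√-7`. -/
def bb : ℕ → ℤ
  | 0 => 0
  | 1 => 1
  | (k + 2) => bb (k + 1) - 2 * bb k

lemma J_eq : ∀ k, J k = 1 + 2 * aa k + 4 * 2 ^ k := by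
  have key : ∀ k, (J k = 1 + 2 * aa k + 4 * 2 ^ k) ∧
      (J (k+1) = 1 + 2 * aa (k+1) + 4 * 2 ^ (k+1)) ∧
      (J (k+2) = 1 + 2 * aa (k+2) + 4 * 2 ^ (k+2)) ∧
      (J (k+3) = 1 + 2 * aa (k+3) + 4 * 2 ^ (k+3)) := by
    intro k
    induction k with
    | zero => refine ⟨?_, ?_, ?_, ?_⟩ <;> norm_num [J, aa]
    | succ n ih =>
      obtain ⟨h0, h1, h2, h3⟩ := ih
      refine ⟨h1, h2, h3, ?_⟩
      have hJ : J (n+4) = 4 * J (n+3) - 7 * J (n+2) + 8 * J (n+1) - 4 * J n := rfl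
      have ha2 : aa (n+2) = aa (n+1) - 2 * aa n := rfl
      have ha3 : aa (n+3) = aa (n+2) - 2 * aa (n+1) := rfl
      have ha4 : aa (n+4) = aa (n+3) - 2 * aa (n+2) := rfl
      show J (n+4) = 1 + 2 * aa (n+4) + 4 * 2 ^ (n+4)
      rw [hJ, h0, h1, h2, h3, ha4, ha3, ha2]
      ring
  exact fun k => (key k).1

lemma norm_eq : ∀ k, (aa k ^ 2 + 7 * bb k ^ 2 = 4 * 2 ^ k) ∧
    (aa (k+1) ^ 2 + 7 * bb (k+1) ^ 2 = 4 * 2 ^ (k+1)) ∧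
    (aa (k+1) * aa k + 7 * bb (k+1) * bb k = 2 * 2 ^ k) := by
  intro k
  induction k with
  | zero => refine ⟨?_, ?_, ?_⟩ <;> norm_num [aa, bb]
  | succ n ih =>
    obtain ⟨h0, h1, h2⟩ := ih
    refine ⟨h1, ?_, ?_⟩
    · have ha : aa (n+2) = aa (n+1) - 2 * aa n := rfl
      have hb : bb (n+2) = bb (n+1) - 2 * bb n := rfl
      show aa (n+2) ^ 2 + 7 * bb (n+2) ^ 2 = 4 * 2 ^ (n+2)
      rw [ha, hb]; ring_nf; ring_nf at h0 h1 h2; linarith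
    · have ha : aa (n+2) = aa (n+1) - 2 * aa n := rfl
      have hb : bb (n+2) = bb (n+1) - 2 * bb n := rfl
      show aa (n+2) * aa (n+1) + 7 * bb (n+2) * bb (n+1) = 2 * 2 ^ (n+1)
      rw [ha, hb]; ring_nf; ring_nf at h0 h1 h2; linarith

lemma aa_mod7 : ∀ k, (aa k % 7 = 2 ∧ aa (k+1) % 7 = 1 ∧ (2:ℤ) ^ k % 7 = 1) ∨
    (aa k % 7 = 1 ∧ aa (k+1) % 7 = 4 ∧ (2:ℤ) ^ k % 7 = 2) ∨
    (aa k % 7 = 4 ∧ aa (k+1) % 7 = 2 ∧ (2:ℤ) ^ k % 7 = 4) := by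
  intro k
  induction k with
  | zero => left; norm_num [aa]
  | succ n ih =>
    have ha : aa (n+1+1) = aa (n+1) - 2 * aa n := rfl
    have hp : (2:ℤ) ^ (n+1) = 2 * 2 ^ n := by ring
    rcases ih with ⟨x, y, z⟩ | ⟨x, y, z⟩ | ⟨x, y, z⟩ <;> omega

lemma aa_odd : ∀ k, aa (k+1) % 2 = 1 := by
  intro k
  induction k with
  | zero => norm_num [aa]
  | succ n ih =>
    have ha : aa (n+1+1) = aa (n+1) - 2 * aa n := rfl
    omega

theorem J_basic_properties :
    (∀ k : ℕ, 1 ≤ k → Odd (J k) ∧ ¬ (7 : ℤ) ∣ J k ∧ 11 ≤ J k) ∧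
    (∀ k : ℕ, 1 < k → J k % 4 = 3 ∧ ¬ IsSquare (J k)) := by
  constructor
  · intro k hk
    have hJ := J_eq k
    refine ⟨⟨aa k + 2 * 2 ^ k, by rw [hJ]; ring⟩, ?_, ?_⟩
    · rcases aa_mod7 k with ⟨x, y, z⟩ | ⟨x, y, z⟩ | ⟨x, y, z⟩ <;> omega
    · have hsq : aa k ^ 2 ≤ 4 * 2 ^ k := by
        have h := (norm_eq k).1
        nlinarith [sq_nonneg (bb k)]
      by_cases hk3 : k ≤ 3
      · interval_cases k <;> norm_num [J]
      · have ht : (16:ℤ) ≤ 2 ^ k := by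
          calc (16:ℤ) = 2 ^ 4 := by norm_num
          _ ≤ 2 ^ k := pow_le_pow_right₀ (by norm_num) (by omega)
        nlinarith [sq_nonneg (2 * aa k + 4 * 2 ^ k - 10)]
  · intro k hk
    have hJ := J_eq k
    have hodd : aa k % 2 = 1 := by
      rcases k with _ | m
      · omega
      · exact aa_odd m
    have hx : (4:ℤ) * 2 ^ k % 4 = 0 := Int.mul_emod_right 4 _
    have h4 : J k % 4 = 3 := by omega
    refine ⟨h4, ?_⟩
    rintro ⟨r, hr⟩
    rcases Int.even_or_odd r with ⟨m, rfl⟩ | ⟨m, rfl⟩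
    · have h5 : J k = (m * m) * 4 := by rw [hr]; ring
      omega
    · have h5 : J k = (m * m + m) * 4 + 1 := by rw [hr]; ring
      omega
end
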